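/- Let G be a simple graph on the vertex set Fin n such that there is no triple i < j < k with both {i,j} and {j,k} edges of G (no transitive edges) and no quadruple i < j < k < l with both {i,k} and {j,l} edges of G (no crossing edges). Then G is acyclic (a forest). -/

import Mathlib

open SimpleGraph

/-- In a cycle, every support vertex has two distinct neighbors along the cycle. -/
lemma two_nbrs {V : Type*} [DecidableEq V] {G : SimpleGraph V} {v u : V}
    (p : G.Walk v v) (hp : p.IsCycle) (hu : u ∈ p.support) :
    ∃ a b : V, a ≠ b ∧ s(u, a) ∈ p.edges ∧ s(u, b) ∈ p.edges := by
  have hq : (p.rotate u hu).IsCycle := hp.rotate hu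
  have hmem : ∀ e, e ∈ (p.rotate u hu).edges ↔ e ∈ p.edges :=
    fun e => (p.rotate_edges u hu).mem_iff
  set q := p.rotate u hu with hqdef
  clear_value q
  cases q with
  | nil => exact absurd rfl hq.ne_nil
  | cons h q' =>
    rename_i x
    rw [SimpleGraph.Walk.cons_isCycle_iff] at hq
    have hx : s(u, x) ∈ (SimpleGraph.Walk.cons h q').edges := by simp
    have hux : u ≠ x := h.ne
    obtain ⟨y, h2, q'', hceq⟩ := SimpleGraph.Walk.exists_eq_cons_of_ne hux q'.reverse
    have hy : s(u, y) ∈ q'.reverse.edges := by rw [hceq]; simp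
    rw [SimpleGraph.Walk.edges_reverse, List.mem_reverse] at hy
    have hxy : x ≠ y := by
      rintro rfl
      exact hq.2 (by simpa [Sym2.eq_swap] using hy)
    refine ⟨x, y, hxy, (hmem _).mp hx, (hmem _).mp ?_⟩
    exact List.mem_cons_of_mem _ hy

/-- A simple graph on the linearly ordered vertex set `Fin n`
with no transitive pair of edges (`{i,j}, {j,k}` with `i < j < k`) and no
crossing pair of edges (`{i,k}, {j,l}` with `i < j < k < l`) is acyclic. -/
theorem no_transitive_no_crossing_acyclic
    (n : ℕ) (G : SimpleGraph (Fin n))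
    (htrans : ∀ i j k : Fin n, i < j → j < k → G.Adj i j → G.Adj j k → False)
    (hcross : ∀ i j k l : Fin n, i < j → j < k → k < l → G.Adj i k → G.Adj j l → False) :
    G.IsAcyclic := by
  intro v p hp
  classical
  -- span of an edge
  set sp : Sym2 (Fin n) → ℕ :=
    Sym2.lift ⟨fun a b => (a.val - b.val) + (b.val - a.val), by
      intro a b; dsimp only; omega⟩ with hsp
  have hspab : ∀ a b : Fin n, a < b → sp s(a, b) = b.val - a.val := by
    intro a b hab
    have h : (a : ℕ) < b := hab
    simp only [hsp, Sym2.lift_mk]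
    omega
  set E : Finset (Sym2 (Fin n)) := p.edges.toFinset with hE
  have hEne : E.Nonempty := by
    have := hp.ne_nil
    cases p with
    | nil => simp at this
    | cons h q =>
      rename_i x
      exact ⟨s(v, x), by simp [hE]⟩
  obtain ⟨e, heE, hmin⟩ := E.exists_min_image sp hEne
  have heP : e ∈ p.edges := by simpa [hE] using heE
  -- key step: given the minimal edge with endpoints u < v, derive False
  have key : ∀ u v : Fin n, u < v → s(u, v) ∈ p.edges → sp s(u, v) = sp e → False := by
    intro u v huv hmem hspe
    have hadj : G.Adj u v := p.adj_of_mem_edges hmem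
    -- neighbor of v other than u
    obtain ⟨a, b, hab, ha, hb⟩ :=
      two_nbrs p hp (p.snd_mem_support_of_mem_edges hmem)
    have hw : ∃ w : Fin n, w ≠ u ∧ s(v, w) ∈ p.edges := by
      by_cases h : a = u
      · exact ⟨b, by rw [← h]; exact hab.symm, hb⟩
      · exact ⟨a, h, ha⟩
    obtain ⟨w, hwu, hwmem⟩ := hw
    have hadjvw : G.Adj v w := p.adj_of_mem_edges hwmem
    -- neighbor of u other than v
    obtain ⟨a', b', hab', ha', hb'⟩ :=
      two_nbrs p hp (p.fst_mem_support_of_mem_edges hmem)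
    have hz : ∃ z : Fin n, z ≠ v ∧ s(u, z) ∈ p.edges := by
      by_cases h : a' = v
      · exact ⟨b', by rw [← h]; exact hab'.symm, hb'⟩
      · exact ⟨a', h, ha'⟩
    obtain ⟨z, hzv, hzmem⟩ := hz
    have hadjuz : G.Adj u z := p.adj_of_mem_edges hzmem
    -- w < u
    have hwv : w ≠ v := hadjvw.ne'
    have hwltu : w < u := by
      rcases lt_trichotomy w v with h1 | h1 | h1
      · rcases lt_trichotomy w u with h2 | h2 | h2
        · exact h2
        · exact absurd h2 hwu
        · -- u < w < v : smaller span, contradiction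
          exfalso
          have h3 : sp s(w, v) < sp e := by
            rw [hspab w v h1, ← hspe, hspab u v huv]
            omega
          have h4 : sp e ≤ sp s(w, v) := hmin _ (by simpa [hE, Sym2.eq_swap] using hwmem)
          omega
      · exact absurd h1 hwv
      · exact absurd (htrans u v w huv h1 hadj hadjvw) not_false
    -- z > v
    have hzu : z ≠ u := hadjuz.ne'
    have hzgtv : v < z := by
      rcases lt_trichotomy z u with h1 | h1 | h1
      · exact absurd (htrans z u v h1 huv hadjuz.symm hadj) not_false
      · exact absurd h1 hzu
      · rcases lt_trichotomy z v with h2 | h2 | h2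
        · exfalso
          have h3 : sp s(u, z) < sp e := by
            rw [hspab u z h1, ← hspe, hspab u v huv]
            omega
          have h4 : sp e ≤ sp s(u, z) := hmin _ (by simpa [hE] using hzmem)
          omega
        · exact absurd h2 hzv
        · exact h2
    exact hcross w u v z hwltu huv hzgtv hadjvw.symm hadjuz
  -- apply to the minimal edge itself
  induction e using Sym2.inductionOn with
  | hf u v =>
    have hadj : G.Adj u v := p.adj_of_mem_edges heP
    rcases lt_trichotomy u v with h | h | h
    · exact key u v h heP rfl
    · exact hadj.ne h
    · exact key v u h (by simpa [Sym2.eq_swap] using heP) (by rw [Sym2.eq_swap])
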